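/- arXiv:1603.04191 — 8 statements merged into one kernel-verified Lean document; each statement's English description precedes it below -/
import Mathlib

section
/- Let Q be a quiver with finitely many vertices such that all singular vertices lie in Q'⁰ ⊆ Q⁰ and every cycle of Q meets Q'⁰. For v ∈ Q⁰ with B_v finite and nonempty, in any algebra A with a Cuntz-Krieger Q-family {v, e, e*}, one has v = Σ_{α ∈ B_v} α α*, where for a path α = α₁…αₙ, α denotes the product e_{α₁}⋯e_{αₙ} and α* the product e*_{αₙ}⋯e*_{α₁}. -/
structure Qvr where
  V : Type
  E : Type
  s : E → V
  r : E → V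

namespace Qvr

variable (Q : Qvr)

/-- A finite list of edges is a path if consecutive edges are composable. -/
def IsPath (μ : List Q.E) : Prop :=
  μ.Chain' (fun e f => Q.r e = Q.s f)

/-- The source of a nonempty path. -/
def pathSrc (μ : List Q.E) (h : μ ≠ []) : Q.V :=
  Q.s (μ.head h)

/-- The range of a nonempty path. -/
def pathRng (μ : List Q.E) (h : μ ≠ []) : Q.V :=
  Q.r (μ.getLast h)

/-- A cycle is a nonempty closed path with pairwise distinct sources of its edges. -/
def IsCycle (μ : List Q.E) : Prop :=
  ∃ h : μ ≠ [], Q.IsPath μ ∧ Q.pathRng μ h = Q.pathSrc μ h ∧ (μ.map Q.s).Nodup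

/-- Every cycle of `Q` passes through a vertex of `W`. -/
def CyclesMeet (W : Set Q.V) : Prop :=
  ∀ μ : List Q.E, Q.IsCycle μ → ∃ e ∈ μ, Q.s e ∈ W

/-- A sink is a vertex emitting no edges. -/
def IsSink (v : Q.V) : Prop := ∀ e : Q.E, Q.s e ≠ v

/-- A regular vertex emits at least one and only finitely many edges. -/
def IsRegular (v : Q.V) : Prop :=
  {e : Q.E | Q.s e = v}.Nonempty ∧ {e : Q.E | Q.s e = v}.Finite

end Qvr

namespace Qvr

/-- `μ` is a nonempty path from `v` whose range lies in `W` and all of whose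
intermediate range vertices lie outside `W`. -/
structure IsBPath (Q : Qvr) (W : Set Q.V) (v : Q.V) (μ : List Q.E) : Prop where
  ne : μ ≠ []
  path : Q.IsPath μ
  src : Q.pathSrc μ ne = v
  rng_mem : Q.pathRng μ ne ∈ W
  mid : ∀ i : Fin μ.length, (i : ℕ) + 1 < μ.length → Q.r (μ.get i) ∉ W

/-- The set `B_v` of the paper. -/
def BSet (Q : Qvr) (W : Set Q.V) (v : Q.V) : Set (List Q.E) :=
  {μ | Q.IsBPath W v μ}

end Qvr

/-- A Cuntz–Krieger `Q`-family in a ring `A`: pairwise orthogonal idempotents indexed by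
vertices, together with elements `X e` (edges) and `Y e` (ghost edges) satisfying the
Cuntz–Krieger relations. -/
structure IsQFamily (Q : Qvr) [DecidableEq Q.V] [DecidableEq Q.E] {A : Type} [Ring A]
    (P : Q.V → A) (X Y : Q.E → A) : Prop where
  orth : ∀ v w : Q.V, P v * P w = if v = w then P v else 0
  src_mul : ∀ e : Q.E, P (Q.s e) * X e = X e
  mul_rng : ∀ e : Q.E, X e * P (Q.r e) = X e
  rng_mul : ∀ e : Q.E, P (Q.r e) * Y e = Y e
  mul_src : ∀ e : Q.E, Y e * P (Q.s e) = Y e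
  ck1 : ∀ e f : Q.E, Y e * X f = if e = f then P (Q.r e) else 0
  ck2 : ∀ (v : Q.V) (h : {e : Q.E | Q.s e = v}.Finite), {e : Q.E | Q.s e = v}.Nonempty →
    P v = ∑ e ∈ h.toFinset, X e * Y e

/-- The element of `A` corresponding to a path (product of the edge elements). -/
def pathProd {Q : Qvr} {A : Type} [Ring A] (X : Q.E → A) (μ : List Q.E) : A :=
  (μ.map X).prod

/-- The element of `A` corresponding to the ghost path `μ*` (product of the ghost edge
elements in reverse order). -/
def pathStar {Q : Qvr} {A : Type} [Ring A] (Y : Q.E → A) (μ : List Q.E) : A :=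
  (μ.reverse.map Y).prod

/-!
Every vertex `u ∉ W` has `B_u ≠ ∅`: otherwise each vertex outside `W` with empty `B` is regular
and all its edges end at vertices of the same kind, so following such edges in the finite quiver
closes up into a cycle avoiding `W`. Hence every edge `e` out of `v` begins some path of `B_v`;
when `B_v` is finite and nonempty, `v` is therefore regular, and `B_v` splits by the first edge
into `[e]` (if `r e ∈ W`) or the paths `e β` with `β ∈ B_{r e}` (if `r e ∉ W`). Now (CK-2) at `v`
and induction on the maximal length of the paths in `B_v` give
`v = Σ e e* = Σ e (r e) e* = Σ_{α ∈ B_v} α α*`.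
-/

namespace Qvr

open Function

variable {Q : Qvr} {W : Set Q.V}

theorem cons_mem_bSet_iff {v : Q.V} {e : Q.E} {β : List Q.E} :
    e :: β ∈ Q.BSet W v ↔
      Q.s e = v ∧ (β = [] ∧ Q.r e ∈ W ∨ Q.r e ∉ W ∧ β ∈ Q.BSet W (Q.r e)) := by
  constructor
  · rintro ⟨_, hpath, rfl, hrng, hmid⟩
    refine ⟨rfl, ?_⟩
    rcases eq_or_ne β [] with rfl | hβ
    · exact Or.inl ⟨rfl, hrng⟩
    have hlen : 0 < β.length := List.length_pos_iff.2 hβ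
    obtain ⟨hhead, hpath⟩ := List.isChain_cons.1 hpath
    refine Or.inr ⟨by simpa using hmid ⟨0, by simp⟩ (by simpa using hlen), hβ, hpath, ?_,
      by simpa [pathRng, List.getLast_cons hβ] using hrng, fun ⟨k, hk⟩ hk1 => ?_⟩
    · exact (hhead _ (List.head?_eq_some_head hβ)).symm
    · simpa using hmid ⟨k + 1, by simpa using hk⟩ (by simpa using hk1)
  · rintro ⟨rfl, ⟨rfl, hr⟩ | ⟨hr, hβ, hpath, hsrc, hrng, hmid⟩⟩
    · exact ⟨List.cons_ne_nil _ _, List.isChain_singleton _, rfl, hr,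
        fun _ hi => by simp at hi⟩
    refine ⟨List.cons_ne_nil _ _, List.isChain_cons.2 ⟨?_, hpath⟩, rfl,
      by simpa [pathRng, List.getLast_cons hβ] using hrng, ?_⟩
    · rintro f hf
      rw [List.head?_eq_some_head hβ, Option.mem_some_iff] at hf
      exact hf ▸ hsrc.symm
    · rintro ⟨_ | k, hk⟩ hk1
      · simpa using hr
      · simpa using hmid ⟨k, by simpa using hk⟩ (by simpa using hk1)

theorem isCycle_map_range_minimalPeriod (ed : Q.V → Q.E) {x : Q.V}
    (hx : x ∈ periodicPts (Q.r ∘ ed))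
    (hs : ∀ k, Q.s (ed ((Q.r ∘ ed)^[k] x)) = (Q.r ∘ ed)^[k] x) :
    Q.IsCycle
      ((List.range (minimalPeriod (Q.r ∘ ed) x)).map fun k => ed ((Q.r ∘ ed)^[k] x)) := by
  set g := Q.r ∘ ed
  have hr : ∀ k, Q.r (ed (g^[k] x)) = g^[k + 1] x := fun k => (iterate_succ_apply' g k x).symm
  have hpos := minimalPeriod_pos_of_mem_periodicPts hx
  refine ⟨by simpa using hpos.ne', ?_, ?_, ?_⟩
  · rw [IsPath, List.Chain', List.isChain_iff_getElem]
    intro k hk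
    simp only [List.getElem_map, List.getElem_range, hr, hs]
  · simp only [pathRng, pathSrc, List.getLast_map, List.head_map, List.getLast_range,
      List.head_range, hr, Nat.sub_add_cancel hpos, iterate_minimalPeriod]
    exact (hs 0).symm
  · rw [List.map_map, show Q.s ∘ (fun k => ed (g^[k] x)) = (g^[·] x) from funext hs]
    exact List.nodup_range.map_on fun a ha b hb hab =>
      iterate_injOn_Iio_minimalPeriod (by simpa using ha) (by simpa using hb) hab

theorem exists_isCycle_of_forall_exists_edge [Finite Q.V] {S : Set Q.V} (hS : S.Nonempty)
    (h : ∀ x ∈ S, ∃ e, Q.s e = x ∧ Q.r e ∈ S) : ∃ μ, Q.IsCycle μ ∧ ∀ e ∈ μ, Q.s e ∈ S := by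
  obtain ⟨u, hu⟩ := hS
  have : Nonempty Q.E := ⟨(h u hu).choose⟩
  choose! ed hsrc hrng using h
  set g := Q.r ∘ ed
  have hmaps : Set.MapsTo g S S := hrng
  obtain ⟨m, n, hmn, hper⟩ :=
    S.toFinite.exists_lt_map_eq_of_forall_mem fun n => hmaps.iterate n hu
  set x := g^[m] u
  have hx : x ∈ periodicPts g := by
    refine mk_mem_periodicPts (Nat.sub_pos_of_lt hmn) ?_
    rw [IsPeriodicPt, IsFixedPt, ← iterate_add_apply, Nat.sub_add_cancel hmn.le, ← hper]
  have horbit : ∀ k, g^[k] x ∈ S := fun k => hmaps.iterate k (hmaps.iterate m hu)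
  refine ⟨_, isCycle_map_range_minimalPeriod ed hx fun k => hsrc _ (horbit k), ?_⟩
  simp only [List.mem_map, List.mem_range]
  rintro _ ⟨k, -, rfl⟩
  rw [hsrc _ (horbit k)]
  exact horbit k

theorem bSet_nonempty_of_notMem [Finite Q.V] (hsing : ∀ v, v ∉ W → Q.IsRegular v)
    (hcyc : Q.CyclesMeet W) {u : Q.V} (hu : u ∉ W) : (Q.BSet W u).Nonempty := by
  by_contra hu'
  set S := {x | x ∉ W ∧ ¬(Q.BSet W x).Nonempty}
  have hstep : ∀ x ∈ S, ∃ e, Q.s e = x ∧ Q.r e ∈ S := by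
    rintro x ⟨hxW, hx⟩
    obtain ⟨e, rfl⟩ := (hsing x hxW).1
    have hre : Q.r e ∉ W := fun hrW =>
      hx ⟨[e], cons_mem_bSet_iff.2 ⟨rfl, .inl ⟨rfl, hrW⟩⟩⟩
    exact ⟨e, rfl, hre, fun ⟨β, hβ⟩ =>
      hx ⟨e :: β, cons_mem_bSet_iff.2 ⟨rfl, .inr ⟨hre, hβ⟩⟩⟩⟩
  obtain ⟨μ, hμ, hμS⟩ := exists_isCycle_of_forall_exists_edge (S := S) ⟨u, hu, hu'⟩ hstep
  obtain ⟨e, he, heW⟩ := hcyc μ hμ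
  exact (hμS e he).1 heW

theorem exists_cons_mem_bSet (hreach : ∀ u, u ∉ W → (Q.BSet W u).Nonempty) (e : Q.E) :
    ∃ β, e :: β ∈ Q.BSet W (Q.s e) := by
  by_cases hr : Q.r e ∈ W
  · exact ⟨[], cons_mem_bSet_iff.2 ⟨rfl, .inl ⟨rfl, hr⟩⟩⟩
  · obtain ⟨β, hβ⟩ := hreach _ hr
    exact ⟨β, cons_mem_bSet_iff.2 ⟨rfl, .inr ⟨hr, hβ⟩⟩⟩

theorem finite_source_eq_of_bSet_finite (hreach : ∀ u, u ∉ W → (Q.BSet W u).Nonempty)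
    {v : Q.V} (hfin : (Q.BSet W v).Finite) : {e : Q.E | Q.s e = v}.Finite := by
  refine ((hfin.image List.head?).preimage (Option.some_injective _).injOn).subset ?_
  rintro e rfl
  obtain ⟨β, hβ⟩ := exists_cons_mem_bSet hreach e
  exact ⟨_, hβ, rfl⟩

theorem bSet_finite_of_cons {e : Q.E} (hfin : (Q.BSet W (Q.s e)).Finite) (hr : Q.r e ∉ W) :
    (Q.BSet W (Q.r e)).Finite :=
  (hfin.preimage List.cons_injective.injOn).subset fun _ hβ =>
    cons_mem_bSet_iff.2 ⟨rfl, .inr ⟨hr, hβ⟩⟩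

variable [DecidableEq Q.E]

theorem filter_head_bSet_of_mem {e : Q.E} (hfin : (Q.BSet W (Q.s e)).Finite) (hr : Q.r e ∈ W) :
    hfin.toFinset.filter (·.head? = some e) = {[e]} := by
  ext (_ | ⟨f, β⟩)
  · simp
  simp only [Finset.mem_filter, Set.Finite.mem_toFinset, List.head?_cons, Option.some_inj,
    Finset.mem_singleton, List.cons.injEq]
  constructor
  · rintro ⟨hβ, rfl⟩
    rcases (cons_mem_bSet_iff.1 hβ).2 with ⟨rfl, -⟩ | ⟨hr', -⟩
    · exact ⟨rfl, rfl⟩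
    · exact absurd hr hr'
  · rintro ⟨rfl, rfl⟩
    exact ⟨cons_mem_bSet_iff.2 ⟨rfl, .inl ⟨rfl, hr⟩⟩, rfl⟩

theorem filter_head_bSet_of_notMem {e : Q.E} (hfin : (Q.BSet W (Q.s e)).Finite)
    (hr : Q.r e ∉ W) (hfin' : (Q.BSet W (Q.r e)).Finite) :
    hfin.toFinset.filter (·.head? = some e) = hfin'.toFinset.image (e :: ·) := by
  ext (_ | ⟨f, β⟩)
  · simp
  simp only [Finset.mem_filter, Set.Finite.mem_toFinset, List.head?_cons, Option.some_inj,
    Finset.mem_image, List.cons.injEq]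
  constructor
  · rintro ⟨hβ, rfl⟩
    rcases (cons_mem_bSet_iff.1 hβ).2 with ⟨-, hr'⟩ | ⟨-, hβ'⟩
    · exact absurd hr' hr
    · exact ⟨β, hβ', rfl, rfl⟩
  · rintro ⟨β, hβ, rfl, rfl⟩
    exact ⟨cons_mem_bSet_iff.2 ⟨rfl, .inr ⟨hr, hβ⟩⟩, rfl⟩

theorem sum_bSet_eq_sum_source_eq {M : Type*} [AddCommMonoid M] {v : Q.V}
    (hfin : (Q.BSet W v).Finite) (hE : {e : Q.E | Q.s e = v}.Finite) (f : List Q.E → M) :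
    ∑ μ ∈ hfin.toFinset, f μ =
      ∑ e ∈ hE.toFinset, ∑ μ ∈ hfin.toFinset.filter (·.head? = some e), f μ := by
  have hmaps : ∀ μ ∈ hfin.toFinset, μ.head? ∈ hE.toFinset.image some := by
    rintro (_ | ⟨e, β⟩) hμ
    · exact absurd rfl (hfin.mem_toFinset.1 hμ).ne
    · exact Finset.mem_image_of_mem _
        (hE.mem_toFinset.2 (cons_mem_bSet_iff.1 (hfin.mem_toFinset.1 hμ)).1)
  rw [← Finset.sum_fiberwise_of_maps_to hmaps, Finset.sum_image (Option.some_injective _).injOn]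

end Qvr

section PathProd

variable {Q : Qvr} {A : Type} [Ring A]

@[simp]
theorem pathProd_cons (X : Q.E → A) (e : Q.E) (β : List Q.E) :
    pathProd X (e :: β) = X e * pathProd X β := by
  simp [pathProd]

@[simp]
theorem pathStar_cons (Y : Q.E → A) (e : Q.E) (β : List Q.E) :
    pathStar Y (e :: β) = pathStar Y β * Y e := by
  simp [pathStar]

end PathProd

namespace IsQFamily

open Qvr

variable {Q : Qvr} [DecidableEq Q.V] [DecidableEq Q.E] {A : Type} [Ring A]
  {P : Q.V → A} {X Y : Q.E → A} {W : Set Q.V}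

theorem eq_sum_bSet_of_length_le (hfam : IsQFamily Q P X Y)
    (hreach : ∀ u, u ∉ W → (Q.BSet W u).Nonempty) (n : ℕ) {v : Q.V}
    (hfin : (Q.BSet W v).Finite) (hne : (Q.BSet W v).Nonempty)
    (hlen : ∀ μ ∈ Q.BSet W v, μ.length ≤ n) :
    P v = ∑ μ ∈ hfin.toFinset, pathProd X μ * pathStar Y μ := by
  induction n generalizing v with
  | zero =>
    obtain ⟨μ, hμ⟩ := hne
    exact absurd (List.length_eq_zero_iff.1 (Nat.le_zero.1 (hlen μ hμ))) hμ.ne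
  | succ n ih =>
    have hE := finite_source_eq_of_bSet_finite hreach hfin
    obtain ⟨_ | ⟨e₀, β₀⟩, hμ⟩ := hne
    · exact absurd rfl hμ.ne
    rw [hfam.ck2 v hE ⟨e₀, (cons_mem_bSet_iff.1 hμ).1⟩, sum_bSet_eq_sum_source_eq hfin hE]
    refine Finset.sum_congr rfl fun e he => ?_
    obtain rfl : Q.s e = v := hE.mem_toFinset.1 he
    by_cases hr : Q.r e ∈ W
    · simp [filter_head_bSet_of_mem hfin hr, pathProd, pathStar]
    have hfin' := bSet_finite_of_cons hfin hr
    have hPr := ih hfin' (hreach _ hr) fun β hβ => by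
      simpa using hlen _ (cons_mem_bSet_iff.2 ⟨rfl, .inr ⟨hr, hβ⟩⟩)
    rw [filter_head_bSet_of_notMem hfin hr hfin',
      Finset.sum_image fun _ _ _ _ h => List.cons_injective h]
    calc X e * Y e = X e * P (Q.r e) * Y e := by rw [hfam.mul_rng]
      _ = _ := by
        simp only [hPr, Finset.mul_sum, Finset.sum_mul, pathProd_cons, pathStar_cons, mul_assoc]

end IsQFamily

/-- Under the standing hypotheses (finitely many vertices, all singular
vertices in `W`, every cycle meets `W`), if `B_v` is finite and nonempty then in any ring
with a Cuntz–Krieger `Q`-family one has `P v = ∑_{α ∈ B_v} α α*`. -/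
theorem stmt3 (Q : Qvr) [Fintype Q.V] [DecidableEq Q.V] [DecidableEq Q.E]
    (W : Set Q.V) (hsing : ∀ v : Q.V, v ∉ W → Q.IsRegular v) (hcyc : Q.CyclesMeet W)
    {A : Type} [Ring A] (P : Q.V → A) (X Y : Q.E → A) (hfam : IsQFamily Q P X Y)
    (v : Q.V) (hfin : (Q.BSet W v).Finite) (hne : (Q.BSet W v).Nonempty) :
    P v = ∑ μ ∈ hfin.toFinset, pathProd X μ * pathStar Y μ :=
  hfam.eq_sum_bSet_of_length_le (fun _ hu => Q.bSet_nonempty_of_notMem hsing hcyc hu) _ hfin hne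
    fun _ hμ => Finset.le_sup (f := List.length) (hfin.mem_toFinset.2 hμ)
end

section
/- Let X ⊆ Q⁰ for a quiver Q. Define Λ₀(X) = T(X) (the set of all vertices reachable from X by paths) and Λₙ(X) = {y ∈ Q⁰ : s⁻¹(y) ≠ ∅, r(s⁻¹(y)) ⊆ Λₙ₋₁(X)} ∪ Λₙ₋₁(X) for n ≥ 1, where only regular vertices y are added. Then ⋃_{n=0}^∞ Λₙ(X) is the hereditary saturated closure of X, i.e., the smallest hereditary and saturated subset of Q⁰ containing X. -/
namespace Qvr

/-- `v ≥ w`: there is a (possibly trivial) path from `v` to `w`. -/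
def Reaches (Q : Qvr) (v w : Q.V) : Prop :=
  v = w ∨ ∃ (μ : List Q.E) (h : μ ≠ []), Q.IsPath μ ∧ Q.pathSrc μ h = v ∧ Q.pathRng μ h = w

/-- A set of vertices is hereditary if it is closed under reachability. -/
def Hereditary (Q : Qvr) (H : Set Q.V) : Prop :=
  ∀ v ∈ H, ∀ w : Q.V, Q.Reaches v w → w ∈ H

/-- A set of vertices is saturated if it contains every regular vertex all of whose
out-neighbours lie in it. -/
def Saturated (Q : Qvr) (H : Set Q.V) : Prop :=
  ∀ v : Q.V, Q.IsRegular v → (∀ e : Q.E, Q.s e = v → Q.r e ∈ H) → v ∈ H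

/-- The hereditary saturated closure of a set of vertices: the smallest hereditary and
saturated subset containing it. -/
def hsClosure (Q : Qvr) (X : Set Q.V) : Set Q.V :=
  ⋂₀ {H : Set Q.V | Q.Hereditary H ∧ Q.Saturated H ∧ X ⊆ H}

end Qvr

namespace Qvr

/-- The tower `Λₙ(X)`: `Λ₀(X) = T(X)` is the set of vertices reachable from `X`, and
`Λₙ₊₁(X)` adds those regular vertices all of whose out-neighbours lie in `Λₙ(X)`. -/
def Lam (Q : Qvr) (X : Set Q.V) : ℕ → Set Q.V
  | 0 => {w | ∃ v ∈ X, Q.Reaches v w}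
  | n + 1 => {y | Q.IsRegular y ∧ ∀ e : Q.E, Q.s e = y → Q.r e ∈ Q.Lam X n} ∪ Q.Lam X n

end Qvr


/-!
Each `Λₙ(X)` is hereditary, by induction on `n`: a path leaving a vertex added at stage `n + 1`
starts with an edge landing in `Λₙ(X)`. Any hereditary saturated `H ⊇ X` contains every `Λₙ(X)`,
again by induction. Finally the increasing union is saturated because a regular vertex emits
only finitely many edges, so their ranges all lie in a single `Λₙ(X)`.
-/

namespace Qvr

variable {Q : Qvr}

theorem Reaches.refl (v : Q.V) : Q.Reaches v v := Or.inl rfl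

theorem Reaches.trans {u v w : Q.V} (huv : Q.Reaches u v) (hvw : Q.Reaches v w) :
    Q.Reaches u w := by
  rcases huv with rfl | ⟨μ, hμ, hpμ, rfl, rfl⟩
  · exact hvw
  rcases hvw with rfl | ⟨ν, hν, hpν, hsν, rfl⟩
  · exact Or.inr ⟨μ, hμ, hpμ, rfl, rfl⟩
  refine Or.inr ⟨μ ++ ν, by simp [hμ], hpμ.append hpν ?_, ?_, ?_⟩
  · simp only [List.getLast?_eq_some_getLast hμ, List.head?_eq_some_head hν, Option.mem_some_iff]
    rintro _ rfl _ rfl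
    exact hsν.symm
  · simp [pathSrc, List.head_append_of_ne_nil hμ]
  · simp [pathRng, List.getLast_append_of_ne_nil _ hν]

theorem Reaches.eq_or_exists_edge {v w : Q.V} (h : Q.Reaches v w) :
    v = w ∨ ∃ e : Q.E, Q.s e = v ∧ Q.Reaches (Q.r e) w := by
  rcases h with rfl | ⟨_ | ⟨e, μ⟩, hne, hp, hs, hr⟩
  · exact Or.inl rfl
  · exact absurd rfl hne
  refine Or.inr ⟨e, hs, ?_⟩
  rcases μ with _ | ⟨f, μ⟩
  · exact Or.inl hr
  · obtain ⟨hef, hp⟩ := List.isChain_cons_cons.mp hp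
    exact Or.inr ⟨f :: μ, List.cons_ne_nil _ _, hp, hef.symm, by simpa [pathRng] using hr⟩

variable {X : Set Q.V}

theorem Lam_mono : Monotone (Q.Lam X) :=
  monotone_nat_of_le_succ fun _ => Set.subset_union_right

theorem hereditary_Lam (n : ℕ) : Q.Hereditary (Q.Lam X n) := by
  induction n with
  | zero =>
    rintro v ⟨u, hu, huv⟩ w hvw
    exact ⟨u, hu, huv.trans hvw⟩
  | succ n ih =>
    rintro v (⟨hreg, hout⟩ | hv) w hvw
    · rcases hvw.eq_or_exists_edge with rfl | ⟨e, rfl, hw⟩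
      · exact Or.inl ⟨hreg, hout⟩
      · exact Or.inr (ih _ (hout e rfl) w hw)
    · exact Or.inr (ih v hv w hvw)

theorem Lam_subset_of_hereditary_saturated {H : Set Q.V} (hher : Q.Hereditary H)
    (hsat : Q.Saturated H) (hXH : X ⊆ H) (n : ℕ) : Q.Lam X n ⊆ H := by
  induction n with
  | zero =>
    rintro w ⟨v, hv, hvw⟩
    exact hher v (hXH hv) w hvw
  | succ n ih =>
    rintro v (⟨hreg, hout⟩ | hv)
    · exact hsat v hreg fun e he => ih (hout e he)
    · exact ih hv

theorem subset_iUnion_Lam : X ⊆ ⋃ n, Q.Lam X n :=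
  fun x hx => Set.mem_iUnion.mpr ⟨0, x, hx, Reaches.refl x⟩

theorem hereditary_iUnion_Lam : Q.Hereditary (⋃ n, Q.Lam X n) := by
  intro v hv w hvw
  obtain ⟨n, hn⟩ := Set.mem_iUnion.mp hv
  exact Set.mem_iUnion.mpr ⟨n, hereditary_Lam n v hn w hvw⟩

theorem saturated_iUnion_Lam : Q.Saturated (⋃ n, Q.Lam X n) := by
  intro v hreg hout
  have hfin : (Q.r '' {e | Q.s e = v}).Finite := hreg.2.image Q.r
  have hcover : ↑hfin.toFinset ⊆ ⋃ n, Q.Lam X n := by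
    rw [hfin.coe_toFinset]
    rintro _ ⟨e, he, rfl⟩
    exact hout e he
  obtain ⟨n, hn⟩ := Lam_mono.directed_le.exists_mem_subset_of_finset_subset_biUnion hcover
  rw [hfin.coe_toFinset] at hn
  exact Set.mem_iUnion.mpr ⟨n + 1, Or.inl ⟨hreg, fun e he => hn ⟨e, he, rfl⟩⟩⟩

end Qvr

/-- `⋃ₙ Λₙ(X)` is the hereditary saturated closure of `X`: it equals the
intersection of all hereditary saturated sets containing `X`, and is itself hereditary,
saturated and contains `X` (hence is the smallest such set). -/
theorem stmt6 (Q : Qvr) (X : Set Q.V) :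
    (⋃ n : ℕ, Q.Lam X n) = Q.hsClosure X ∧
      Q.Hereditary (⋃ n : ℕ, Q.Lam X n) ∧
      Q.Saturated (⋃ n : ℕ, Q.Lam X n) ∧
      X ⊆ ⋃ n : ℕ, Q.Lam X n := by
  refine ⟨?_, Qvr.hereditary_iUnion_Lam, Qvr.saturated_iUnion_Lam, Qvr.subset_iUnion_Lam⟩
  refine Set.Subset.antisymm ?_ ?_
  · exact Set.subset_sInter fun H ⟨hher, hsat, hXH⟩ =>
      Set.iUnion_subset (Qvr.Lam_subset_of_hereditary_saturated hher hsat hXH)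
  · exact Set.sInter_subset_of_mem
      ⟨Qvr.hereditary_iUnion_Lam, Qvr.saturated_iUnion_Lam, Qvr.subset_iUnion_Lam⟩
end

section
/- Elementary strong shift equivalence of square non-negative integer matrices (A ∼ B iff A = LR and B = RL for some non-negative integer matrices L, R) is a reflexive and symmetric relation, but it is not transitive in general; its transitive closure, strong shift equivalence, is an equivalence relation. -/
/-!
Reflexivity and symmetry are immediate (`A = A·1 = 1·A`; swap `L` and `R`), and the transitive
closure of a reflexive symmetric relation is an equivalence. For non-transitivity,
`[2] = (1 1)(1 1)ᵀ` is elementary equivalent to the all-ones `2 × 2` matrix, which in turn factors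
as `L R` with `R L = !![1,1,0; 1,1,0; 1,0,0]`. A matrix `R L` factoring through a one-dimensional
space has all `2 × 2` minors zero, and this one does not, so it is not elementary equivalent
to `[2]`.
-/

/-- The type of square matrices of arbitrary size with non-negative integer entries. -/
def MatNN : Type := Σ n : ℕ, Matrix (Fin n) (Fin n) ℕ

/-- Elementary strong shift equivalence: `A = L·R` and `B = R·L` for some non-negative
integer matrices `L`, `R`. -/
def ElemSSE (A B : MatNN) : Prop :=
  ∃ (L : Matrix (Fin A.1) (Fin B.1) ℕ) (R : Matrix (Fin B.1) (Fin A.1) ℕ),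
    A.2 = L * R ∧ B.2 = R * L

theorem Relation.equivalence_transGen {α : Type*} (r : α → α → Prop) [Std.Refl r] [Std.Symm r] :
    Equivalence (Relation.TransGen r) := by
  rw [← Relation.reflTransGen_eq_transGen, ← Relation.EqvGen.eqvGen_eq_reflTransGen]
  exact Relation.EqvGen.is_equivalence r

theorem Matrix.mul_apply_mul_mul_apply_comm {m n α : Type*} [CommSemiring α]
    (R : Matrix m (Fin 1) α) (L : Matrix (Fin 1) n α) (i k : m) (j l : n) :
    (R * L) i j * (R * L) k l = (R * L) i l * (R * L) k j := by
  simp only [Matrix.mul_apply, Fin.sum_univ_one]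
  ring

namespace ElemSSE

instance : Std.Refl ElemSSE :=
  ⟨fun A => ⟨A.2, 1, (mul_one _).symm, (one_mul _).symm⟩⟩

instance : Std.Symm ElemSSE :=
  ⟨fun _ _ ⟨L, R, hA, hB⟩ => ⟨R, L, hB, hA⟩⟩

theorem apply_mul_apply_comm_of_size_one {a : Matrix (Fin 1) (Fin 1) ℕ} {B : MatNN}
    (h : ElemSSE ⟨1, a⟩ B) (i j k l : Fin B.1) :
    B.2 i j * B.2 k l = B.2 i l * B.2 k j := by
  obtain ⟨L, R, -, hB⟩ := h
  rw [hB]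
  exact Matrix.mul_apply_mul_mul_apply_comm R L i k j l

theorem not_transitive : ¬ Transitive ElemSSE := by
  intro htrans
  have h₁ : ElemSSE ⟨1, !![2]⟩ ⟨2, !![1, 1; 1, 1]⟩ :=
    ⟨!![1, 1], !![1; 1], by decide, by decide⟩
  have h₂ : ElemSSE ⟨2, !![1, 1; 1, 1]⟩ ⟨3, !![1, 1, 0; 1, 1, 0; 1, 0, 0]⟩ :=
    ⟨!![1, 0, 0; 0, 1, 0], !![1, 1; 1, 1; 1, 0], by decide, by decide⟩
  have hminor := apply_mul_apply_comm_of_size_one (htrans h₁ h₂) 0 0 2 1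
  exact absurd hminor (by decide)

end ElemSSE

/-- Elementary strong shift equivalence is reflexive and symmetric but not
transitive; its transitive closure (strong shift equivalence) is an equivalence relation. -/
theorem stmt10 :
    Reflexive ElemSSE ∧ Symmetric ElemSSE ∧ ¬ Transitive ElemSSE ∧
      Equivalence (Relation.TransGen ElemSSE) :=
  ⟨Std.Refl.refl, Std.Symm.symm, ElemSSE.not_transitive, Relation.equivalence_transGen ElemSSE⟩
end

section
/- If square non-negative integer matrices A and B are strong shift equivalent, then A and B are shift equivalent: there exist non-negative integer matrices C and D and a positive integer n such that Aⁿ = CD, Bⁿ = DC, AC = CB, and DA = BD. -/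
/-- Strong shift equivalence: the transitive closure of elementary strong shift
equivalence. -/
def SSE : MatNN → MatNN → Prop := Relation.TransGen ElemSSE

namespace Matrix

variable {R : Type*} [Semiring R] {ι κ μ : Type*} [Fintype ι] [Fintype κ] [Fintype μ]
  [DecidableEq ι] [DecidableEq κ] [DecidableEq μ]

theorem pow_mul_eq_mul_pow {A : Matrix ι ι R} {B : Matrix κ κ R} {C : Matrix ι κ R}
    (h : A * C = C * B) (k : ℕ) : A ^ k * C = C * B ^ k := by
  induction k with
  | zero => simp
  | succ k ih => rw [pow_succ', Matrix.mul_assoc, ih, ← Matrix.mul_assoc, h, Matrix.mul_assoc,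
      ← pow_succ']

def ShiftEquiv (A : Matrix ι ι R) (B : Matrix κ κ R) : Prop :=
  ∃ N : ℕ, 0 < N ∧ ∃ (C : Matrix ι κ R) (D : Matrix κ ι R),
    A ^ N = C * D ∧ B ^ N = D * C ∧ A * C = C * B ∧ D * A = B * D

theorem shiftEquiv_mul_mul (L : Matrix ι κ R) (M : Matrix κ ι R) :
    ShiftEquiv (L * M) (M * L) :=
  ⟨1, one_pos, L, M, pow_one _, pow_one _, Matrix.mul_assoc .., (Matrix.mul_assoc ..).symm⟩

theorem ShiftEquiv.trans {A : Matrix ι ι R} {B : Matrix κ κ R} {E : Matrix μ μ R}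
    (hAB : ShiftEquiv A B) (hBE : ShiftEquiv B E) : ShiftEquiv A E := by
  obtain ⟨N, hN, C, D, hCD, hDC, hAC, hDA⟩ := hAB
  obtain ⟨M, -, C', D', hCD', hDC', hBC', hDB'⟩ := hBE
  refine ⟨N + M, by omega, C * C', D' * D, ?_, ?_, ?_, ?_⟩
  · calc A ^ (N + M) = A ^ M * C * D := by rw [add_comm, pow_add, hCD, Matrix.mul_assoc]
      _ = C * C' * (D' * D) := by
        rw [pow_mul_eq_mul_pow hAC, hCD', Matrix.mul_assoc, Matrix.mul_assoc, Matrix.mul_assoc]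
  · calc E ^ (N + M) = E ^ N * D' * C' := by rw [pow_add, hDC', Matrix.mul_assoc]
      _ = D' * D * (C * C') := by
        rw [pow_mul_eq_mul_pow hDB'.symm, hDC, Matrix.mul_assoc, Matrix.mul_assoc,
          Matrix.mul_assoc]
  · rw [← Matrix.mul_assoc, hAC, Matrix.mul_assoc, hBC', Matrix.mul_assoc]
  · rw [Matrix.mul_assoc, hDA, ← Matrix.mul_assoc, hDB', Matrix.mul_assoc]

end Matrix

theorem ElemSSE.shiftEquiv {A B : MatNN} (h : ElemSSE A B) : Matrix.ShiftEquiv A.2 B.2 := by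
  obtain ⟨L, R, hA, hB⟩ := h
  rw [hA, hB]
  exact Matrix.shiftEquiv_mul_mul L R

theorem SSE.shiftEquiv {A B : MatNN} (h : SSE A B) : Matrix.ShiftEquiv A.2 B.2 :=
  Relation.TransGen.trans_induction_on (motive := fun {A B} _ => Matrix.ShiftEquiv A.2 B.2) h
    ElemSSE.shiftEquiv fun _ _ => Matrix.ShiftEquiv.trans

/-- Strong shift equivalent non-negative integer matrices are shift
equivalent: there are non-negative integer matrices `C`, `D` and a lag `N > 0` with
`A^N = C·D`, `B^N = D·C`, `A·C = C·B` and `D·A = B·D`. -/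
theorem stmt11 {n m : ℕ} (A : Matrix (Fin n) (Fin n) ℕ) (B : Matrix (Fin m) (Fin m) ℕ)
    (h : SSE ⟨n, A⟩ ⟨m, B⟩) :
    ∃ (N : ℕ), 0 < N ∧ ∃ (C : Matrix (Fin n) (Fin m) ℕ) (D : Matrix (Fin m) (Fin n) ℕ),
      A ^ N = C * D ∧ B ^ N = D * C ∧ A * C = C * B ∧ D * A = B * D :=
  h.shiftEquiv
end

section
/- Let Q be a finite quiver and n ≥ 2. Then the (n+1)-st higher edge quiver satisfies Q^[n+1] ≅ (Q^[n])^[2]; that is, the higher edge quiver construction iterates: the second higher edge quiver of the n-th higher edge quiver is isomorphic to the (n+1)-st higher edge quiver of Q. -/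
/-- An isomorphism of quivers: bijections on vertices and edges commuting with the
source and range maps. -/
def QIso (Q1 Q2 : Qvr) : Prop :=
  ∃ (fv : Q1.V ≃ Q2.V) (fe : Q1.E ≃ Q2.E),
    (∀ e : Q1.E, Q2.s (fe e) = fv (Q1.s e)) ∧ (∀ e : Q1.E, Q2.r (fe e) = fv (Q1.r e))

/-- Vertices of the `n`-th higher edge quiver: paths of length `n - 1` in `Q`. -/
@[reducible] def HEV (Q : Qvr) (n : ℕ) : Type :=
  {l : List Q.E // Q.IsPath l ∧ l.length + 1 = n}

/-- The `n`-th higher edge quiver `Q^[n]`: vertices are the paths of length `n - 1` and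
there is exactly one edge from `e₁…e_{n-1}` to `f₁…f_{n-1}` whenever
`e₂…e_{n-1} = f₁…f_{n-2}` and the concatenation is again a path (for `n = 2` this says
`r(e₁) = s(f₁)`). -/
@[reducible] def HE (Q : Qvr) (n : ℕ) : Qvr where
  V := HEV Q n
  E := {pq : HEV Q n × HEV Q n //
    ∃ (e f : Q.E) (t : List Q.E), pq.1.1 = e :: t ∧ pq.2.1 = t ++ [f] ∧
      Q.IsPath (e :: (t ++ [f]))}
  s := fun x => x.1.1
  r := fun x => x.1.2

/-! A path of length `n` is the same thing as an edge of `Q^[n]`, running from its first `n - 1`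
edges to its last `n - 1` edges. Two paths of length `n` span an edge of `Q^[n+1]` exactly when
the tail of the first equals the initial segment of the second, i.e. when the corresponding edges
of `Q^[n]` are composable; for `n ≥ 2` this common segment is nonempty and glues the two paths
into one. So `Q^[n+1]` is the line quiver of `Q^[n]`, and so is `(Q^[n])^[2]`, as for any
quiver. -/

theorem QIso.trans {Q₁ Q₂ Q₃ : Qvr} (h₁₂ : QIso Q₁ Q₂) (h₂₃ : QIso Q₂ Q₃) : QIso Q₁ Q₃ := by
  obtain ⟨fv, fe, hs, hr⟩ := h₁₂
  obtain ⟨gv, ge, hs', hr'⟩ := h₂₃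
  exact ⟨fv.trans gv, fe.trans ge, fun e => by simp [hs, hs'], fun e => by simp [hr, hr']⟩

namespace Qvr

variable {Q : Qvr}

def line (Q : Qvr) : Qvr where
  V := Q.E
  E := {ef : Q.E × Q.E // Q.r ef.1 = Q.s ef.2}
  s := fun x => x.1.1
  r := fun x => x.1.2

theorem isPath_cons_append_singleton {e f : Q.E} {t : List Q.E} (he : Q.IsPath (e :: t))
    (hf : Q.IsPath (t ++ [f])) (ht : t ≠ []) : Q.IsPath (e :: (t ++ [f])) :=
  List.IsChain.append_overlap (l₁ := [e]) he hf ht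

theorem exists_overlap_singleton_iff {e f : Q.E} :
    (∃ (e' f' : Q.E) (t : List Q.E), [e] = e' :: t ∧ [f] = t ++ [f'] ∧
      Q.IsPath (e' :: (t ++ [f']))) ↔ Q.r e = Q.s f := by
  constructor
  · rintro ⟨e', f', t, he, hf, hpath⟩
    obtain ⟨rfl, rfl⟩ := List.cons_eq_cons.mp he
    obtain rfl : f = f' := by simpa using hf
    exact (List.isChain_pair (R := fun e f => Q.r e = Q.s f)).mp hpath
  · intro h
    exact ⟨e, f, [], rfl, rfl, (List.isChain_pair (R := fun e f => Q.r e = Q.s f)).mpr h⟩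

theorem exists_overlap_iff_tail_eq_dropLast {p q : List Q.E} (hp : Q.IsPath p)
    (hq : Q.IsPath q) (hp₂ : 2 ≤ p.length) (hq₀ : q ≠ []) :
    (∃ (e f : Q.E) (t : List Q.E), p = e :: t ∧ q = t ++ [f] ∧
      Q.IsPath (e :: (t ++ [f]))) ↔ p.tail = q.dropLast := by
  constructor
  · rintro ⟨e, f, t, rfl, rfl, -⟩
    simp
  · intro h
    obtain ⟨e, t, rfl⟩ := List.exists_cons_of_ne_nil (List.ne_nil_of_length_pos (l := p) (by omega))
    have hq' : q = t ++ [q.getLast hq₀] := by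
      rw [List.tail_cons] at h
      rw [h, List.dropLast_append_getLast]
    have ht : t ≠ [] := List.ne_nil_of_length_pos (by simp at hp₂; omega)
    exact ⟨e, q.getLast hq₀, t, rfl, hq', isPath_cons_append_singleton hp (hq' ▸ hq) ht⟩

theorem exists_overlap_dropLast_tail {l : List Q.E} (hl : Q.IsPath l) (hl₂ : 2 ≤ l.length) :
    ∃ (e f : Q.E) (t : List Q.E), l.dropLast = e :: t ∧ l.tail = t ++ [f] ∧
      Q.IsPath (e :: (t ++ [f])) := by
  obtain ⟨e, l, rfl⟩ := List.exists_cons_of_ne_nil (List.ne_nil_of_length_pos (l := l) (by omega))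
  have hl₀ : l ≠ [] := List.ne_nil_of_length_pos (by simp at hl₂; omega)
  rw [← List.dropLast_append_getLast hl₀] at hl ⊢
  exact ⟨e, l.getLast hl₀, l.dropLast, by simp [List.dropLast_cons_of_ne_nil], rfl, hl⟩

def edgeEquivHEVTwo (Q : Qvr) : Q.E ≃ HEV Q 2 where
  toFun e := ⟨[e], List.isChain_singleton e, rfl⟩
  invFun p := p.1.head (List.ne_nil_of_length_pos (by have := p.2.2; omega))
  left_inv _ := rfl
  right_inv p := by
    obtain ⟨e, he⟩ := List.length_eq_one_iff.mp (by have := p.2.2; omega : p.1.length = 1)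
    exact Subtype.ext (by simp [he])

theorem qIso_line_HE_two (Q : Qvr) : QIso Q.line (HE Q 2) :=
  ⟨Q.edgeEquivHEVTwo,
    Equiv.subtypeEquiv (Q.edgeEquivHEVTwo.prodCongr Q.edgeEquivHEVTwo)
      fun _ => exists_overlap_singleton_iff.symm,
    fun _ => rfl, fun _ => rfl⟩

/-- `take 1` picks out the first edge of a path without a nonemptiness proof. -/
def hevSuccEquivEdge {n : ℕ} (hn : 2 ≤ n) : HEV Q (n + 1) ≃ (HE Q n).E where
  toFun p :=
    have := p.2.2
    ⟨(⟨p.1.dropLast, p.2.1.dropLast, by simp; omega⟩, ⟨p.1.tail, p.2.1.tail, by simp; omega⟩),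
      exists_overlap_dropLast_tail p.2.1 (by omega)⟩
  invFun ε := ⟨ε.1.1.1.take 1 ++ ε.1.2.1, by
      obtain ⟨e, f, t, h₁, h₂, hpath⟩ := ε.2
      simpa [h₁, h₂] using hpath, by
      obtain ⟨e, f, t, h₁, h₂, -⟩ := ε.2
      have := ε.1.1.2.2
      simp only [h₁, h₂, List.length_cons] at this ⊢
      simp; omega⟩
  left_inv p := by
    obtain ⟨p, hpath, hlen⟩ := p
    apply Subtype.ext
    obtain ⟨a, b, l, rfl⟩ : ∃ a b l, p = a :: b :: l := by
      rcases p with _ | ⟨a, _ | ⟨b, l⟩⟩ <;> simp at hlen ⊢ <;> omega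
    simp
  right_inv ε := by
    obtain ⟨⟨⟨p, hp⟩, ⟨q, hq⟩⟩, e, f, t, h₁, h₂, -⟩ := ε
    simp only at h₁ h₂
    subst h₁ h₂
    simp [List.dropLast_cons_of_ne_nil]

theorem qIso_HE_succ_line {n : ℕ} (hn : 2 ≤ n) : QIso (HE Q (n + 1)) (HE Q n).line :=
  ⟨hevSuccEquivEdge hn,
    Equiv.subtypeEquiv ((hevSuccEquivEdge hn).prodCongr (hevSuccEquivEdge hn)) fun pq => by
      have hp := pq.1.2.2
      have hq := pq.2.2.2
      rw [exists_overlap_iff_tail_eq_dropLast pq.1.2.1 pq.2.2.1 (by omega)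
        (List.ne_nil_of_length_pos (by omega))]
      exact Subtype.mk_eq_mk.symm,
    fun _ => rfl, fun _ => rfl⟩

end Qvr

/-- For `n ≥ 2`, the higher edge quiver construction iterates:
`Q^[n+1] ≅ (Q^[n])^[2]`. -/
theorem stmt13 (Q : Qvr) (n : ℕ) (hn : 2 ≤ n) :
    QIso (HE Q (n + 1)) (HE (HE Q n) 2) :=
  (Qvr.qIso_HE_succ_line hn).trans (HE Q n).qIso_line_HE_two
end

section
/- Let Q be a finite quiver with no sinks and let P be a partition of Q¹ refining the partition by ranges (each r⁻¹(v) split into nonempty sets ξ₁ᵛ,…,ξ_{m(v)}ᵛ). Then Q and the in-split quiver Q_r(P) are elementary strong shift equivalent. -/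
/-- Elementary strong shift equivalence of quivers (Definition 5.1 of Bates–Pask): there is
a bipartite quiver with vertex set `Q₁⁰ ⊔ Q₂⁰` (given by its two sets of crossing edges)
and source- and range-preserving bijections from `Qᵢ¹` onto the length-2 paths starting and
ending in the `i`-th block. -/
def ElemSSEQ (Q1 Q2 : Qvr) : Prop :=
  ∃ (E12 E21 : Type) (s12 : E12 → Q1.V) (r12 : E12 → Q2.V)
    (s21 : E21 → Q2.V) (r21 : E21 → Q1.V)
    (θ1 : Q1.E ≃ {p : E12 × E21 // r12 p.1 = s21 p.2})
    (θ2 : Q2.E ≃ {p : E21 × E12 // r21 p.1 = s12 p.2}),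
    (∀ e : Q1.E, s12 (θ1 e).1.1 = Q1.s e ∧ r21 (θ1 e).1.2 = Q1.r e) ∧
    (∀ e : Q2.E, s21 (θ2 e).1.1 = Q2.s e ∧ r12 (θ2 e).1.2 = Q2.r e)

/-- The in-split quiver `Q_r(𝒫)` determined by the data `m : Q⁰ → ℕ` (number of classes of
the partition of `r⁻¹(v)`; `m v = 0` exactly when `v` is a source) and `c : Q¹ → ℕ`
(the class of each edge in the partition of `r⁻¹(r(e))`).  Vertices are the pairs `vᵢ`
(`1 ≤ i ≤ m v`) together with `v₀` for sources `v`; edges are the pairs `eⱼ`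
(`1 ≤ j ≤ m (s e)`) together with `e₀` when `s e` is a source, with `s(eⱼ) = s(e)ⱼ` and
`r(eⱼ) = r(e)ᵢ` where `i = c e` is the class of `e`. -/
@[reducible] def InSplit (Q : Qvr) (m : Q.V → ℕ) (c : Q.E → ℕ)
    (hc : ∀ e : Q.E, 1 ≤ c e ∧ c e ≤ m (Q.r e)) : Qvr where
  V := {p : Q.V × ℕ // (1 ≤ p.2 ∧ p.2 ≤ m p.1) ∨ (p.2 = 0 ∧ m p.1 = 0)}
  E := {q : Q.E × ℕ // (1 ≤ q.2 ∧ q.2 ≤ m (Q.s q.1)) ∨ (q.2 = 0 ∧ m (Q.s q.1) = 0)}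
  s := fun q => ⟨(Q.s q.1.1, q.1.2), q.2⟩
  r := fun q => ⟨(Q.r q.1.1, c q.1.1), Or.inl (hc q.1.1)⟩

/-!
The bipartite quiver witnessing the equivalence has an edge `s(e) → r(e)_{c e}` for every edge
`e` of `Q` and an edge `vᵢ → v` for every vertex `vᵢ` of the in-split quiver. A length-2 path
from `Q⁰` to `Q⁰` is an edge `s(e) → r(e)_{c e}` followed by the unique edge `r(e)_{c e} → r(e)`,
so it is determined by `e`. A length-2 path between split vertices is `vᵢ → v` followed by
`s(f) → r(f)_{c f}` with `s(f) = v`, i.e. exactly the split edge `fᵢ : s(f)ᵢ → r(f)_{c f}`.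
-/

def Function.graphEquiv {α β : Type*} (f : α → β) : α ≃ {p : α × β // f p.1 = p.2} where
  toFun a := ⟨(a, f a), rfl⟩
  invFun p := p.1.1
  left_inv _ := rfl
  right_inv := by
    rintro ⟨⟨a, b⟩, h⟩
    obtain rfl : f a = b := h
    rfl

namespace InSplit

variable {Q : Qvr} {m : Q.V → ℕ} {c : Q.E → ℕ} (hc : ∀ e : Q.E, 1 ≤ c e ∧ c e ≤ m (Q.r e))

def rangeVertex (e : Q.E) : (InSplit Q m c hc).V := ⟨(Q.r e, c e), Or.inl (hc e)⟩

def vertexProj (w : (InSplit Q m c hc).V) : Q.V := w.1.1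

def edgeEquivPath : (InSplit Q m c hc).E ≃
    {p : (InSplit Q m c hc).V × Q.E // vertexProj hc p.1 = Q.s p.2} where
  toFun q := ⟨((InSplit Q m c hc).s q, q.1.1), rfl⟩
  invFun p := ⟨(p.1.2, p.1.1.1.2), p.2 ▸ p.1.1.2⟩
  left_inv _ := rfl
  right_inv := by
    rintro ⟨⟨⟨⟨v, i⟩, hv⟩, e⟩, h⟩
    obtain rfl : v = Q.s e := h
    rfl

end InSplit

theorem stmt14_general (Q : Qvr)
    (m : Q.V → ℕ) (c : Q.E → ℕ)
    (hc : ∀ e : Q.E, 1 ≤ c e ∧ c e ≤ m (Q.r e)) :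
    ElemSSEQ Q (InSplit Q m c hc) :=
  ⟨Q.E, (InSplit Q m c hc).V, Q.s, InSplit.rangeVertex hc, id, InSplit.vertexProj hc,
    Function.graphEquiv (InSplit.rangeVertex hc), InSplit.edgeEquivPath hc,
    fun _ => ⟨rfl, rfl⟩, fun _ => ⟨rfl, rfl⟩⟩

/-- A finite quiver with no sinks is elementary strong shift equivalent
to any of its in-split quivers. -/
theorem stmt14 (Q : Qvr) [Fintype Q.V] [Fintype Q.E]
    (hnosink : ∀ v : Q.V, ∃ e : Q.E, Q.s e = v)
    (m : Q.V → ℕ) (c : Q.E → ℕ)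
    (hc : ∀ e : Q.E, 1 ≤ c e ∧ c e ≤ m (Q.r e))
    (hm0 : ∀ v : Q.V, m v = 0 ↔ ¬ ∃ e : Q.E, Q.r e = v)
    (hcls : ∀ (v : Q.V) (i : ℕ), 1 ≤ i → i ≤ m v → ∃ e : Q.E, Q.r e = v ∧ c e = i) :
    ElemSSEQ Q (InSplit Q m c hc) :=
  stmt14_general Q m c hc
end

section
/- Let Q be a quiver and assign to each edge e a weight w(e) in a group G, with w(e*) = w(e)⁻¹ and w(v) = identity. Then the Leavitt path algebra L_k(Q) is a G-graded algebra: the Cuntz–Krieger relations are homogeneous with respect to this grading, so L_k(Q) inherits a G-grading from the path algebra of the extended quiver. In particular, with w(e) = 1 ∈ ℤ for all edges, L_k(Q)_n = span_k{pq* : p, q paths, length(p) − length(q) = n}. -/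
/-- A (possibly trivial) path in `Q`: a source vertex together with a composable list of
edges starting at it.  The empty list represents the trivial path at `src`. -/
structure QPath (Q : Qvr) where
  src : Q.V
  edges : List Q.E
  chain : Q.IsPath edges
  hsrc : ∀ h : edges ≠ [], Q.pathSrc edges h = src

/-- The range of a path (its source if the path is trivial). -/
def QPath.rng {Q : Qvr} (p : QPath Q) : Q.V :=
  p.edges.getLast?.elim p.src Q.r

/-- Generators of the Leavitt path algebra: vertices, edges and ghost edges. -/
inductive LGen (Q : Qvr) : Type
  | vert : Q.V → LGen Q
  | edge : Q.E → LGen Q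
  | ghost : Q.E → LGen Q

/-- The canonical generators inside the free algebra. -/
def lgen (k : Type) [Field k] (Q : Qvr) (x : LGen Q) : FreeAlgebra k (LGen Q) :=
  FreeAlgebra.ι k x

/-- The defining relations of the Leavitt path algebra of a quiver with finitely many
vertices: the vertices are pairwise orthogonal idempotents summing to `1`, together with
the path algebra relations and the Cuntz–Krieger relations (CK-2 imposed at regular
vertices). -/
inductive LRel (k : Type) [Field k] (Q : Qvr) [Fintype Q.V] :
    FreeAlgebra k (LGen Q) → FreeAlgebra k (LGen Q) → Prop
  | orth (v w : Q.V) (h : v ≠ w) :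
      LRel k Q (lgen k Q (.vert v) * lgen k Q (.vert w)) 0
  | idem (v : Q.V) :
      LRel k Q (lgen k Q (.vert v) * lgen k Q (.vert v)) (lgen k Q (.vert v))
  | src_edge (e : Q.E) :
      LRel k Q (lgen k Q (.vert (Q.s e)) * lgen k Q (.edge e)) (lgen k Q (.edge e))
  | edge_rng (e : Q.E) :
      LRel k Q (lgen k Q (.edge e) * lgen k Q (.vert (Q.r e))) (lgen k Q (.edge e))
  | rng_ghost (e : Q.E) :
      LRel k Q (lgen k Q (.vert (Q.r e)) * lgen k Q (.ghost e)) (lgen k Q (.ghost e))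
  | ghost_src (e : Q.E) :
      LRel k Q (lgen k Q (.ghost e) * lgen k Q (.vert (Q.s e))) (lgen k Q (.ghost e))
  | ck1_eq (e : Q.E) :
      LRel k Q (lgen k Q (.ghost e) * lgen k Q (.edge e)) (lgen k Q (.vert (Q.r e)))
  | ck1_ne (e f : Q.E) (h : e ≠ f) :
      LRel k Q (lgen k Q (.ghost e) * lgen k Q (.edge f)) 0
  | ck2 (v : Q.V) (h : {e : Q.E | Q.s e = v}.Finite) (hne : {e : Q.E | Q.s e = v}.Nonempty) :
      LRel k Q (lgen k Q (.vert v)) (∑ e ∈ h.toFinset, lgen k Q (.edge e) * lgen k Q (.ghost e))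
  | unit : LRel k Q 1 (∑ v : Q.V, lgen k Q (.vert v))

/-- The Leavitt path algebra of `Q` with coefficients in `k`. -/
def LPA (k : Type) [Field k] (Q : Qvr) [Fintype Q.V] : Type :=
  RingQuot (LRel k Q)

noncomputable instance (k : Type) [Field k] (Q : Qvr) [Fintype Q.V] : Ring (LPA k Q) :=
  inferInstanceAs (Ring (RingQuot (LRel k Q)))

noncomputable instance (k : Type) [Field k] (Q : Qvr) [Fintype Q.V] : Algebra k (LPA k Q) :=
  inferInstanceAs (Algebra k (RingQuot (LRel k Q)))

/-- The vertex idempotent `v ∈ L_k(Q)`. -/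
noncomputable def lv (k : Type) [Field k] (Q : Qvr) [Fintype Q.V] (v : Q.V) : LPA k Q :=
  RingQuot.mkAlgHom k (LRel k Q) (lgen k Q (.vert v))

/-- The edge generator `e ∈ L_k(Q)`. -/
noncomputable def le (k : Type) [Field k] (Q : Qvr) [Fintype Q.V] (e : Q.E) : LPA k Q :=
  RingQuot.mkAlgHom k (LRel k Q) (lgen k Q (.edge e))

/-- The ghost edge generator `e* ∈ L_k(Q)`. -/
noncomputable def lg (k : Type) [Field k] (Q : Qvr) [Fintype Q.V] (e : Q.E) : LPA k Q :=
  RingQuot.mkAlgHom k (LRel k Q) (lgen k Q (.ghost e))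

/-- The element `p ∈ L_k(Q)` corresponding to a path: the source idempotent times the
product of the edge generators. -/
noncomputable def pelem (k : Type) [Field k] (Q : Qvr) [Fintype Q.V] (p : QPath Q) :
    LPA k Q :=
  lv k Q p.src * (p.edges.map (le k Q)).prod

/-- The element `p* ∈ L_k(Q)` corresponding to a ghost path: the product of the ghost edge
generators in reverse order times the source idempotent. -/
noncomputable def pstar (k : Type) [Field k] (Q : Qvr) [Fintype Q.V] (p : QPath Q) :
    LPA k Q :=
  (p.edges.reverse.map (lg k Q)).prod * lv k Q p.src

/-- The homogeneous component of degree `g` of `L_k(Q)` for the grading induced by a weight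
map `w : Q¹ → G` (with `w(e*) = -w(e)` and vertices of weight `0`): the span of the
monomials `p q*` with `r(p) = r(q)` and `w(p) - w(q) = g`. -/
noncomputable def gradeComp (k : Type) [Field k] (Q : Qvr) [Fintype Q.V]
    (G : Type) [AddGroup G] (w : Q.E → G) (g : G) : Submodule k (LPA k Q) :=
  Submodule.span k {x : LPA k Q | ∃ p q : QPath Q, p.rng = q.rng ∧
    (p.edges.map w).sum - (q.edges.map w).sum = g ∧ x = pelem k Q p * pstar k Q q}


theorem DirectSum.of_congr {ι σ A : Type*} [DecidableEq ι] [AddCommMonoid A] [SetLike σ A]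
    [AddSubmonoidClass σ A] {𝒜 : ι → σ} {i j : ι} {a : 𝒜 i} {b : 𝒜 j} (hij : i = j)
    (hab : (a : A) = b) :
    DirectSum.of (fun i => 𝒜 i) i a = DirectSum.of (fun i => 𝒜 i) j b := by
  subst hij
  rw [Subtype.ext hab]

namespace QPath

variable {Q : Qvr}

theorem getLast?_elim_cons (e : Q.E) (l : List Q.E) (v : Q.V) :
    (e :: l).getLast?.elim v Q.r = l.getLast?.elim (Q.r e) Q.r := by
  rw [List.getLast?_cons]
  cases l.getLast? <;> rfl

theorem s_eq_src_of_mem_head? (p : QPath Q) {e : Q.E} (he : e ∈ p.edges.head?) :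
    Q.s e = p.src := by
  obtain ⟨src, _ | ⟨f, t⟩, _, hsrc⟩ := p
  · simp at he
  · obtain rfl : f = e := by simpa using he
    exact hsrc (List.cons_ne_nil _ _)

theorem rng_eq_r_of_mem_getLast? (p : QPath Q) {e : Q.E} (he : e ∈ p.edges.getLast?) :
    p.rng = Q.r e := by
  simp [rng, Option.mem_def.mp he]

def nil (v : Q.V) : QPath Q :=
  ⟨v, [], List.isChain_nil, fun h => absurd rfl h⟩

def cons (e : Q.E) (p : QPath Q) (h : Q.r e = p.src) : QPath Q where
  src := Q.s e
  edges := e :: p.edges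
  chain :=
    List.isChain_cons.mpr ⟨fun _ hf => h.trans (p.s_eq_src_of_mem_head? hf).symm, p.chain⟩
  hsrc _ := rfl

def snoc (p : QPath Q) (e : Q.E) (h : p.rng = Q.s e) : QPath Q where
  src := p.src
  edges := p.edges ++ [e]
  chain := List.isChain_append.mpr ⟨p.chain, List.isChain_singleton e, fun x hx y hy => by
    obtain rfl : y = e := by simpa using hy.symm
    rw [← h, p.rng_eq_r_of_mem_getLast? hx]⟩
  hsrc h' := by
    obtain ⟨src, _ | ⟨f, t⟩, _, hsrc⟩ := p
    · exact h.symm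
    · exact hsrc (List.cons_ne_nil _ _)

@[simp] theorem rng_nil (v : Q.V) : (nil v).rng = v := rfl

@[simp] theorem rng_cons (e : Q.E) (p : QPath Q) (h : Q.r e = p.src) :
    (p.cons e h).rng = p.rng := by
  rw [rng, cons, getLast?_elim_cons, h]
  rfl

@[simp] theorem rng_snoc (p : QPath Q) (e : Q.E) (h : p.rng = Q.s e) :
    (p.snoc e h).rng = Q.r e := by
  simp [rng, snoc]

theorem eq_nil_or_eq_cons (p : QPath Q) :
    p = nil p.src ∨ ∃ (e : Q.E) (p' : QPath Q) (h : Q.r e = p'.src), p = p'.cons e h := by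
  obtain ⟨src, _ | ⟨e, t⟩, chain, hsrc⟩ := p
  · exact Or.inl rfl
  · obtain rfl : Q.s e = src := hsrc (List.cons_ne_nil _ _)
    refine Or.inr ⟨e, ⟨Q.r e, t, chain.tail, fun ht => ?_⟩, rfl, rfl⟩
    exact ((List.isChain_cons.mp chain).1 _ (List.head?_eq_some_head ht)).symm

end QPath

def LGen.deg {Q : Qvr} {G : Type} [AddGroup G] (w : Q.E → G) : LGen Q → G
  | .vert _ => 0
  | .edge e => w e
  | .ghost e => -w e

namespace LPA

noncomputable def gen (k : Type) [Field k] (Q : Qvr) [Fintype Q.V] (x : LGen Q) : LPA k Q :=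
  RingQuot.mkAlgHom k (LRel k Q) (lgen k Q x)

def monomialWord {Q : Qvr} (p q : QPath Q) : List (LGen Q) :=
  .vert p.src :: p.edges.map .edge ++ q.edges.reverse.map .ghost ++ [.vert q.src]

theorem sum_deg_monomialWord {Q : Qvr} {G : Type} [AddGroup G] (w : Q.E → G) (p q : QPath Q) :
    ((monomialWord p q).map (LGen.deg w)).sum = (p.edges.map w).sum - (q.edges.map w).sum := by
  simp [monomialWord, LGen.deg, Function.comp_def, sub_eq_add_neg, List.sum_neg_reverse]

variable {k : Type} [Field k] {Q : Qvr} [Fintype Q.V]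

theorem lv_mul_self (v : Q.V) : lv k Q v * lv k Q v = lv k Q v :=
  (map_mul _ _ _).symm.trans (RingQuot.mkAlgHom_rel k (LRel.idem v))

theorem lv_mul_lv_of_ne {v u : Q.V} (h : v ≠ u) : lv k Q v * lv k Q u = 0 :=
  (map_mul _ _ _).symm.trans ((RingQuot.mkAlgHom_rel k (LRel.orth v u h)).trans (map_zero _))

theorem lv_s_mul_le (e : Q.E) : lv k Q (Q.s e) * le k Q e = le k Q e :=
  (map_mul _ _ _).symm.trans (RingQuot.mkAlgHom_rel k (LRel.src_edge e))

theorem le_mul_lv_r (e : Q.E) : le k Q e * lv k Q (Q.r e) = le k Q e :=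
  (map_mul _ _ _).symm.trans (RingQuot.mkAlgHom_rel k (LRel.edge_rng e))

theorem lv_r_mul_lg (e : Q.E) : lv k Q (Q.r e) * lg k Q e = lg k Q e :=
  (map_mul _ _ _).symm.trans (RingQuot.mkAlgHom_rel k (LRel.rng_ghost e))

theorem lg_mul_lv_s (e : Q.E) : lg k Q e * lv k Q (Q.s e) = lg k Q e :=
  (map_mul _ _ _).symm.trans (RingQuot.mkAlgHom_rel k (LRel.ghost_src e))

theorem lg_mul_le_self (e : Q.E) : lg k Q e * le k Q e = lv k Q (Q.r e) :=
  (map_mul _ _ _).symm.trans (RingQuot.mkAlgHom_rel k (LRel.ck1_eq e))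

theorem lg_mul_le_of_ne {e f : Q.E} (h : e ≠ f) : lg k Q e * le k Q f = 0 :=
  (map_mul _ _ _).symm.trans ((RingQuot.mkAlgHom_rel k (LRel.ck1_ne e f h)).trans (map_zero _))

theorem lv_eq_sum_le_mul_lg (v : Q.V) (hfin : {e : Q.E | Q.s e = v}.Finite)
    (hne : {e : Q.E | Q.s e = v}.Nonempty) :
    lv k Q v = ∑ e ∈ hfin.toFinset, le k Q e * lg k Q e :=
  (RingQuot.mkAlgHom_rel k (LRel.ck2 v hfin hne)).trans
    ((map_sum _ _ _).trans (Finset.sum_congr rfl fun _ _ => map_mul _ _ _))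

theorem sum_lv : ∑ v : Q.V, lv k Q v = 1 :=
  ((map_sum _ _ _).symm.trans (RingQuot.mkAlgHom_rel k LRel.unit).symm).trans (map_one _)

theorem le_mul_lv_of_ne {e : Q.E} {v : Q.V} (h : Q.r e ≠ v) : le k Q e * lv k Q v = 0 := by
  rw [← le_mul_lv_r, mul_assoc, lv_mul_lv_of_ne h, mul_zero]

theorem lg_mul_lv_of_ne {e : Q.E} {v : Q.V} (h : Q.s e ≠ v) : lg k Q e * lv k Q v = 0 := by
  rw [← lg_mul_lv_s, mul_assoc, lv_mul_lv_of_ne h, mul_zero]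

theorem lv_src_mul_pelem (p : QPath Q) : lv k Q p.src * pelem k Q p = pelem k Q p := by
  rw [pelem, ← mul_assoc, lv_mul_self]

@[simp] theorem pelem_nil (v : Q.V) : pelem k Q (.nil v) = lv k Q v := mul_one _

@[simp] theorem pstar_nil (v : Q.V) : pstar k Q (.nil v) = lv k Q v := one_mul _

theorem pelem_cons (e : Q.E) (p : QPath Q) (h : Q.r e = p.src) :
    pelem k Q (p.cons e h) = le k Q e * pelem k Q p := by
  rw [pelem, pelem, ← h, ← mul_assoc, le_mul_lv_r]
  simp only [QPath.cons, List.map_cons, List.prod_cons, ← mul_assoc, lv_s_mul_le]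

theorem pstar_snoc (q : QPath Q) (e : Q.E) (h : q.rng = Q.s e) :
    pstar k Q (q.snoc e h) = lg k Q e * pstar k Q q := by
  simp [pstar, QPath.snoc, mul_assoc]

@[simp] theorem gen_vert (v : Q.V) : gen k Q (.vert v) = lv k Q v := rfl
@[simp] theorem gen_edge (e : Q.E) : gen k Q (.edge e) = le k Q e := rfl
@[simp] theorem gen_ghost (e : Q.E) : gen k Q (.ghost e) = lg k Q e := rfl

theorem monomial_eq_prod_monomialWord (p q : QPath Q) :
    pelem k Q p * pstar k Q q = ((monomialWord p q).map (gen k Q)).prod := by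
  simp [monomialWord, pelem, pstar, Function.comp_def, mul_assoc]

variable {G : Type} [AddGroup G] (w : Q.E → G)

theorem monomial_mem {p q : QPath Q} {g : G} (h : p.rng = q.rng)
    (hg : (p.edges.map w).sum - (q.edges.map w).sum = g) :
    pelem k Q p * pstar k Q q ∈ gradeComp k Q G w g :=
  Submodule.subset_span ⟨p, q, h, hg, rfl⟩

/- Left multiplication by a generator keeps monomials in normal form: a vertex or an edge
extends `p` on the left (or kills the monomial), while a ghost edge `e*` cancels the first edge
of `p` by CK1, or, when `p` is trivial, extends `q` at its end. -/
theorem gen_mul_monomial_mem (x : LGen Q) {p q : QPath Q} (h : p.rng = q.rng) :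
    gen k Q x * (pelem k Q p * pstar k Q q) ∈
      gradeComp k Q G w (x.deg w + ((p.edges.map w).sum - (q.edges.map w).sum)) := by
  cases x with
  | vert v =>
    by_cases hv : v = p.src
    · rw [gen_vert, ← mul_assoc, hv, lv_src_mul_pelem]
      exact monomial_mem w h (zero_add _).symm
    · rw [gen_vert, ← lv_src_mul_pelem, ← mul_assoc, ← mul_assoc, lv_mul_lv_of_ne hv, zero_mul,
        zero_mul]
      exact zero_mem _
  | edge e =>
    by_cases he : Q.r e = p.src
    · rw [gen_edge, ← mul_assoc, ← pelem_cons e p he]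
      exact monomial_mem w (by simpa using h) (by simp [QPath.cons, LGen.deg, add_sub_assoc])
    · rw [gen_edge, ← lv_src_mul_pelem, ← mul_assoc, ← mul_assoc, le_mul_lv_of_ne he, zero_mul,
        zero_mul]
      exact zero_mem _
  | ghost e =>
    rw [gen_ghost]
    rcases p.eq_nil_or_eq_cons with hp | ⟨f, p, hf, rfl⟩
    · rw [hp] at h ⊢
      generalize p.src = v at h ⊢
      rw [QPath.rng_nil] at h
      rw [pelem_nil]
      by_cases hv : Q.s e = v
      · subst hv
        have hsnoc : lg k Q e * pstar k Q q =
            pelem k Q (.nil (Q.r e)) * pstar k Q (q.snoc e h.symm) := by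
          rw [pelem_nil, pstar_snoc, ← mul_assoc, lv_r_mul_lg]
        rw [← mul_assoc, lg_mul_lv_s, hsnoc]
        exact monomial_mem w (by simp) (by simp [QPath.snoc, QPath.nil, LGen.deg])
      · rw [← mul_assoc, lg_mul_lv_of_ne hv, zero_mul]
        exact zero_mem _
    · rw [pelem_cons, mul_assoc]
      by_cases hef : e = f
      · subst hef
        rw [← mul_assoc, lg_mul_le_self, hf, ← mul_assoc, lv_src_mul_pelem]
        exact monomial_mem w (by simpa using h) (by simp [QPath.cons, LGen.deg, add_sub_assoc])
      · rw [← mul_assoc, lg_mul_le_of_ne hef, zero_mul]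
        exact zero_mem _

theorem gen_mul_mem (x : LGen Q) {g : G} {y : LPA k Q} (hy : y ∈ gradeComp k Q G w g) :
    gen k Q x * y ∈ gradeComp k Q G w (x.deg w + g) := by
  induction hy using Submodule.span_induction with
  | mem y hy =>
    obtain ⟨p, q, h, rfl, rfl⟩ := hy
    exact gen_mul_monomial_mem w x h
  | zero => simpa only [mul_zero] using zero_mem _
  | add y z _ _ hy hz => simpa only [mul_add] using add_mem hy hz
  | smul c y _ hy => simpa only [mul_smul_comm] using Submodule.smul_mem _ c hy

theorem list_prod_gen_mul_mem (L : List (LGen Q)) {g : G} {y : LPA k Q}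
    (hy : y ∈ gradeComp k Q G w g) :
    (L.map (gen k Q)).prod * y ∈ gradeComp k Q G w ((L.map (LGen.deg w)).sum + g) := by
  induction L with
  | nil => simpa using hy
  | cons x L ih => simpa [mul_assoc, add_assoc] using gen_mul_mem w x ih

theorem lv_mem (v : Q.V) : lv k Q v ∈ gradeComp k Q G w 0 := by
  simpa [lv_mul_self] using
    monomial_mem (k := k) w (p := .nil v) (q := .nil v) rfl (by simp [QPath.nil])

theorem one_mem_gradeComp : (1 : LPA k Q) ∈ gradeComp k Q G w 0 :=
  sum_lv (k := k) (Q := Q) ▸ Submodule.sum_mem _ fun v _ => lv_mem w v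

theorem gen_mem (x : LGen Q) : gen k Q x ∈ gradeComp k Q G w (x.deg w) := by
  simpa using gen_mul_mem w x (one_mem_gradeComp w)

theorem list_prod_gen_mem (L : List (LGen Q)) :
    (L.map (gen k Q)).prod ∈ gradeComp k Q G w ((L.map (LGen.deg w)).sum) := by
  simpa using list_prod_gen_mul_mem w L (one_mem_gradeComp w)

theorem mul_mem_gradeComp {g h : G} {a b : LPA k Q} (ha : a ∈ gradeComp k Q G w g)
    (hb : b ∈ gradeComp k Q G w h) : a * b ∈ gradeComp k Q G w (g + h) := by
  induction ha using Submodule.span_induction with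
  | mem x hx =>
    obtain ⟨p, q, -, rfl, rfl⟩ := hx
    rw [monomial_eq_prod_monomialWord, ← sum_deg_monomialWord w p q]
    exact list_prod_gen_mul_mem w _ hb
  | zero => simpa only [zero_mul] using zero_mem _
  | add x y _ _ hx hy => simpa only [add_mul] using add_mem hx hy
  | smul c x _ hx => simpa only [smul_mul_assoc] using Submodule.smul_mem _ c hx

instance : SetLike.GradedMonoid (gradeComp k Q G w) where
  one_mem := one_mem_gradeComp w
  mul_mem _ _ _ _ := mul_mem_gradeComp w

open DirectSum

variable [DecidableEq G]

noncomputable def freeDecompose : FreeAlgebra k (LGen Q) →ₐ[k] ⨁ g, gradeComp k Q G w g :=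
  FreeAlgebra.lift k fun x =>
    of (fun g => gradeComp k Q G w g) (x.deg w) ⟨gen k Q x, gen_mem w x⟩

theorem freeDecompose_lgen (x : LGen Q) :
    freeDecompose w (lgen k Q x) =
      of (fun g => gradeComp k Q G w g) (x.deg w) ⟨gen k Q x, gen_mem w x⟩ :=
  FreeAlgebra.lift_ι_apply _ _

theorem freeDecompose_lgen_vert (v : Q.V) :
    freeDecompose w (lgen k Q (.vert v)) =
      of (fun g => gradeComp k Q G w g) 0 ⟨lv k Q v, lv_mem w v⟩ :=
  freeDecompose_lgen w _

theorem freeDecompose_lgen_mul_lgen {x y : LGen Q} {g : G} (hg : x.deg w + y.deg w = g) :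
    freeDecompose w (lgen k Q x * lgen k Q y) = of (fun g => gradeComp k Q G w g) g
      ⟨gen k Q x * gen k Q y, hg ▸ mul_mem_gradeComp w (gen_mem w x) (gen_mem w y)⟩ := by
  rw [map_mul, freeDecompose_lgen, freeDecompose_lgen, of_mul_of]
  exact of_congr hg rfl

theorem freeDecompose_lgen_mul_lgen_eq {x y z : LGen Q} (hg : x.deg w + y.deg w = z.deg w)
    (h : gen k Q x * gen k Q y = gen k Q z) :
    freeDecompose w (lgen k Q x * lgen k Q y) = freeDecompose w (lgen k Q z) := by
  rw [freeDecompose_lgen_mul_lgen w hg, freeDecompose_lgen]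
  exact of_congr rfl h

theorem freeDecompose_lgen_mul_lgen_eq_zero {x y : LGen Q} (h : gen k Q x * gen k Q y = 0) :
    freeDecompose w (lgen k Q x * lgen k Q y) = freeDecompose w 0 := by
  rw [freeDecompose_lgen_mul_lgen w rfl, map_zero]
  exact (of_congr rfl h).trans (map_zero _)

theorem freeDecompose_rel ⦃a b : FreeAlgebra k (LGen Q)⦄ (h : LRel k Q a b) :
    freeDecompose w a = freeDecompose w b := by
  induction h with
  | orth v u h => exact freeDecompose_lgen_mul_lgen_eq_zero w (lv_mul_lv_of_ne h)
  | idem v => exact freeDecompose_lgen_mul_lgen_eq w (add_zero 0) (lv_mul_self v)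
  | src_edge e => exact freeDecompose_lgen_mul_lgen_eq w (zero_add _) (lv_s_mul_le e)
  | edge_rng e => exact freeDecompose_lgen_mul_lgen_eq w (add_zero _) (le_mul_lv_r e)
  | rng_ghost e => exact freeDecompose_lgen_mul_lgen_eq w (zero_add _) (lv_r_mul_lg e)
  | ghost_src e => exact freeDecompose_lgen_mul_lgen_eq w (add_zero _) (lg_mul_lv_s e)
  | ck1_eq e => exact freeDecompose_lgen_mul_lgen_eq w (neg_add_cancel _) (lg_mul_le_self e)
  | ck1_ne e f h => exact freeDecompose_lgen_mul_lgen_eq_zero w (lg_mul_le_of_ne h)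
  | ck2 v hfin hne =>
    rw [map_sum, Finset.sum_congr rfl fun e _ =>
      freeDecompose_lgen_mul_lgen w (x := .edge e) (y := .ghost e) (add_neg_cancel (w e)),
      ← map_sum, freeDecompose_lgen]
    exact of_congr rfl (by simpa using lv_eq_sum_le_mul_lg v hfin hne)
  | unit =>
    rw [map_one, map_sum, Finset.sum_congr rfl fun v _ => freeDecompose_lgen_vert w v,
      ← map_sum, one_def]
    exact of_congr rfl (by simpa using (sum_lv (k := k) (Q := Q)).symm)

noncomputable def decompose : LPA k Q →ₐ[k] ⨁ g, gradeComp k Q G w g :=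
  RingQuot.liftAlgHom k ⟨freeDecompose w, freeDecompose_rel w⟩

theorem decompose_gen (x : LGen Q) :
    decompose w (gen k Q x) =
      of (fun g => gradeComp k Q G w g) (x.deg w) ⟨gen k Q x, gen_mem w x⟩ :=
  (RingQuot.liftAlgHom_mkAlgHom_apply _ _ _ _).trans (freeDecompose_lgen w x)

theorem coeAlgHom_comp_decompose :
    (coeAlgHom (gradeComp k Q G w)).comp (decompose w) = AlgHom.id k (LPA k Q) := by
  refine RingQuot.ringQuot_ext' _ _ _ (FreeAlgebra.hom_ext (funext fun x => ?_))
  exact (congrArg _ (decompose_gen w x)).trans (coeAlgHom_of _ _ _)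

theorem decompose_list_prod_gen (L : List (LGen Q)) :
    decompose w (L.map (gen k Q)).prod = of (fun g => gradeComp k Q G w g)
      ((L.map (LGen.deg w)).sum) ⟨_, list_prod_gen_mem w L⟩ := by
  induction L with
  | nil => exact (map_one _).trans (of_congr (by simp) (by simp))
  | cons x L ih =>
    conv_lhs => rw [List.map_cons, List.prod_cons, map_mul, decompose_gen, ih, of_mul_of]
    exact of_congr (by simp) (by simp)

theorem decompose_coe (g : G) (x : gradeComp k Q G w g) :
    decompose w (x : LPA k Q) = of (fun g => gradeComp k Q G w g) g x := by
  obtain ⟨x, hx⟩ := x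
  induction hx using Submodule.span_induction with
  | mem y hy =>
    obtain ⟨p, q, -, rfl, rfl⟩ := hy
    exact (congrArg _ (monomial_eq_prod_monomialWord p q)).trans
      ((decompose_list_prod_gen w _).trans
        (of_congr (sum_deg_monomialWord w p q) (monomial_eq_prod_monomialWord p q).symm))
  | zero => exact (map_zero _).trans (map_zero _).symm
  | add x y _ _ hx hy =>
    exact (map_add _ _ _).trans ((congrArg₂ _ hx hy).trans (map_add _ _ _).symm)
  | smul c x _ hx => exact (map_smul _ _ _).trans ((congrArg _ hx).trans (of_smul _ _ _ _).symm)

noncomputable instance gradedAlgebra : GradedAlgebra (gradeComp k Q G w) :=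
  GradedAlgebra.ofAlgHom _ (decompose w) (coeAlgHom_comp_decompose w) (decompose_coe w)

end LPA

/-- For any weight map `w : Q¹ → G` (with `w(e*) = -w(e)` and vertices of
weight `0`) the Cuntz–Krieger relations are homogeneous and the Leavitt path algebra
`L_k(Q)` is a `G`-graded algebra with the components `gradeComp`.  In particular, for
`G = ℤ` and `w ≡ 1`, the degree-`n` component is
`span_k {p q* : length p − length q = n}`. -/
theorem stmt17 (k : Type) [Field k] (Q : Qvr) [Fintype Q.V]
    (G : Type) [AddGroup G] [DecidableEq G] (w : Q.E → G) :
    Nonempty (GradedRing (gradeComp k Q G w)) ∧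
      ∀ n : ℤ, gradeComp k Q ℤ (fun _ => (1 : ℤ)) n =
        Submodule.span k {x : LPA k Q | ∃ p q : QPath Q, p.rng = q.rng ∧
          (p.edges.length : ℤ) - (q.edges.length : ℤ) = n ∧
          x = pelem k Q p * pstar k Q q} :=
  ⟨⟨LPA.gradedAlgebra w⟩, fun n => by simp [gradeComp]⟩
end

section
/- Let Q be a finite quiver with no sinks, P a partition of Q¹ obtained by partitioning each s⁻¹(v) into nonempty subsets ξ¹ᵥ,…,ξ^{m(v)}ᵥ, and Q_s(P) the out-split quiver. Then Q and Q_s(P) are elementary strong shift equivalent. -/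
/-- The out-split quiver `Q_s(𝒫)` determined by the data `m : Q⁰ → ℕ` (number of classes of
the partition of `s⁻¹(v)`; `m v = 0` exactly when `v` is a sink) and `c : Q¹ → ℕ` (the class
of each edge in the partition of `s⁻¹(s(e))`).  Vertices are the pairs `vⁱ` (`1 ≤ i ≤ m v`)
together with `v⁰` for sinks `v`; edges are the pairs `eʲ` (`1 ≤ j ≤ m (r e)`) together with
`e⁰` when `r e` is a sink, with `s(eʲ) = s(e)ⁱ` where `i = c e`, and `r(eʲ) = r(e)ʲ`. -/
@[reducible] def OutSplit (Q : Qvr) (m : Q.V → ℕ) (c : Q.E → ℕ)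
    (hc : ∀ e : Q.E, 1 ≤ c e ∧ c e ≤ m (Q.s e)) : Qvr where
  V := {p : Q.V × ℕ // (1 ≤ p.2 ∧ p.2 ≤ m p.1) ∨ (p.2 = 0 ∧ m p.1 = 0)}
  E := {q : Q.E × ℕ // (1 ≤ q.2 ∧ q.2 ≤ m (Q.r q.1)) ∨ (q.2 = 0 ∧ m (Q.r q.1) = 0)}
  s := fun q => ⟨(Q.s q.1.1, c q.1.1), Or.inl (hc q.1.1)⟩
  r := fun q => ⟨(Q.r q.1.1, q.1.2), q.2⟩

namespace ElemSSEQ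

theorem of_edgeEquiv (Q₁ Q₂ : Qvr) (π : Q₂.V → Q₁.V) (σ : Q₁.E → Q₂.V)
    (hσ : ∀ e, π (σ e) = Q₁.s e)
    (θ : Q₂.E ≃ {p : Q₁.E × Q₂.V // Q₁.r p.1 = π p.2})
    (hs : ∀ f, Q₂.s f = σ (θ f).1.1) (hr : ∀ f, Q₂.r f = (θ f).1.2) :
    ElemSSEQ Q₁ Q₂ :=
  let graphEquiv : Q₁.E ≃ {p : Q₂.V × Q₁.E // id p.1 = σ p.2} :=
    { toFun := fun e => ⟨(σ e, e), rfl⟩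
      invFun := fun p => p.1.2
      left_inv := fun _ => rfl
      right_inv := fun p => Subtype.ext (Prod.ext p.2.symm rfl) }
  ⟨Q₂.V, Q₁.E, π, id, σ, Q₁.r, graphEquiv, θ,
    fun e => ⟨hσ e, rfl⟩, fun f => ⟨(hs f).symm, (hr f).symm⟩⟩

end ElemSSEQ

namespace OutSplit

variable (Q : Qvr) (m : Q.V → ℕ) (c : Q.E → ℕ) (hc : ∀ e : Q.E, 1 ≤ c e ∧ c e ≤ m (Q.s e))

def edgeEquiv :
    (OutSplit Q m c hc).E ≃ {p : Q.E × (OutSplit Q m c hc).V // Q.r p.1 = p.2.1.1} where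
  toFun f := ⟨(f.1.1, (OutSplit Q m c hc).r f), rfl⟩
  invFun p := ⟨(p.1.1, p.1.2.1.2), p.2 ▸ p.1.2.2⟩
  left_inv _ := rfl
  right_inv p := Subtype.ext (Prod.ext rfl (Subtype.ext (Prod.ext p.2 rfl)))

theorem elemSSEQ : ElemSSEQ Q (OutSplit Q m c hc) :=
  ElemSSEQ.of_edgeEquiv Q _ (fun w => w.1.1) (fun e => ⟨(Q.s e, c e), Or.inl (hc e)⟩)
    (fun _ => rfl) (edgeEquiv Q m c hc) (fun _ => rfl) (fun _ => rfl)

end OutSplit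

theorem stmt19_general (Q : Qvr)
    (m : Q.V → ℕ) (c : Q.E → ℕ)
    (hc : ∀ e : Q.E, 1 ≤ c e ∧ c e ≤ m (Q.s e)) :
    ElemSSEQ Q (OutSplit Q m c hc) :=
  OutSplit.elemSSEQ Q m c hc

/-- A finite quiver with no sinks is elementary strong shift equivalent
to any of its out-split quivers. -/
theorem stmt19 (Q : Qvr) [Fintype Q.V] [Fintype Q.E]
    (hnosink : ∀ v : Q.V, ∃ e : Q.E, Q.s e = v)
    (m : Q.V → ℕ) (c : Q.E → ℕ)
    (hc : ∀ e : Q.E, 1 ≤ c e ∧ c e ≤ m (Q.s e))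
    (hm0 : ∀ v : Q.V, m v = 0 ↔ ¬ ∃ e : Q.E, Q.s e = v)
    (hcls : ∀ (v : Q.V) (i : ℕ), 1 ≤ i → i ≤ m v → ∃ e : Q.E, Q.s e = v ∧ c e = i) :
    ElemSSEQ Q (OutSplit Q m c hc) :=
  stmt19_general Q m c hc
end
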